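/- For every almost positive formula A whose atoms are among p_1, …, p_k and every tuple of formulas φ_1, …, φ_k, there exists a finite multiset Π of modal Horn formulas all of whose atoms are angled atoms such that CK proves Π, (A(φ̄))^t ⇒ A(φ̄^t), and CK proves (⇒ ⋀Π^s), where s is the standard substitution. -/

import Mathlib

set_option autoImplicit false

namespace UPT

/-- Modal formulas over atoms of type `α` (the language `ℒ = {∧,∨,→,⊤,⊥,□,◇}`). -/
inductive Fml (α : Type) : Type where
  | atom : α → Fml α
  | top  : Fml α
  | bot  : Fml α
  | and  : Fml α → Fml α → Fml α
  | or   : Fml α → Fml α → Fml α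
  | imp  : Fml α → Fml α → Fml α
  | box  : Fml α → Fml α
  | dia  : Fml α → Fml α
deriving DecidableEq

variable {α β : Type}

/-- Simultaneous substitution of formulas for atoms. -/
def Fml.subst (σ : β → Fml α) : Fml β → Fml α
  | .atom b  => σ b
  | .top     => .top
  | .bot     => .bot
  | .and A B => .and (A.subst σ) (B.subst σ)
  | .or A B  => .or (A.subst σ) (B.subst σ)
  | .imp A B => .imp (A.subst σ) (B.subst σ)
  | .box A   => .box (A.subst σ)
  | .dia A   => .dia (A.subst σ)

/-- A sequent: a finite multiset antecedent together with a succedent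
containing at most one formula. -/
abbrev Seq (α : Type) : Type := Multiset (Fml α) × Option (Fml α)

/-- A rule set relates a (finite) list of premise sequents to a conclusion sequent. -/
abbrev RuleSet (α : Type) : Type := List (Seq α) → Seq α → Prop

/-- The axioms and rules of the single-conclusion sequent calculus `LJ`, stated
schematically: they are closed under substituting arbitrary formulas for atoms
and arbitrary multisets (resp. succedents) for the context variables. -/
inductive LJRule : List (Seq α) → Seq α → Prop where
  | id (Γ : Multiset (Fml α)) (A : Fml α) : LJRule [] (A ::ₘ Γ, some A)
  | botL (Γ : Multiset (Fml α)) (Δ : Option (Fml α)) : LJRule [] (.bot ::ₘ Γ, Δ)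
  | topR (Γ : Multiset (Fml α)) : LJRule [] (Γ, some .top)
  | wL (A : Fml α) (Γ : Multiset (Fml α)) (Δ : Option (Fml α)) :
      LJRule [(Γ, Δ)] (A ::ₘ Γ, Δ)
  | wR (A : Fml α) (Γ : Multiset (Fml α)) : LJRule [(Γ, none)] (Γ, some A)
  | cL (A : Fml α) (Γ : Multiset (Fml α)) (Δ : Option (Fml α)) :
      LJRule [(A ::ₘ A ::ₘ Γ, Δ)] (A ::ₘ Γ, Δ)
  | cut (A : Fml α) (Γ : Multiset (Fml α)) (Δ : Option (Fml α)) :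
      LJRule [(Γ, some A), (A ::ₘ Γ, Δ)] (Γ, Δ)
  | andL₁ (A B : Fml α) (Γ : Multiset (Fml α)) (Δ : Option (Fml α)) :
      LJRule [(A ::ₘ Γ, Δ)] (.and A B ::ₘ Γ, Δ)
  | andL₂ (A B : Fml α) (Γ : Multiset (Fml α)) (Δ : Option (Fml α)) :
      LJRule [(B ::ₘ Γ, Δ)] (.and A B ::ₘ Γ, Δ)
  | andR (A B : Fml α) (Γ : Multiset (Fml α)) :
      LJRule [(Γ, some A), (Γ, some B)] (Γ, some (.and A B))
  | orL (A B : Fml α) (Γ : Multiset (Fml α)) (Δ : Option (Fml α)) :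
      LJRule [(A ::ₘ Γ, Δ), (B ::ₘ Γ, Δ)] (.or A B ::ₘ Γ, Δ)
  | orR₁ (A B : Fml α) (Γ : Multiset (Fml α)) : LJRule [(Γ, some A)] (Γ, some (.or A B))
  | orR₂ (A B : Fml α) (Γ : Multiset (Fml α)) : LJRule [(Γ, some B)] (Γ, some (.or A B))
  | impL (A B : Fml α) (Γ : Multiset (Fml α)) (Δ : Option (Fml α)) :
      LJRule [(Γ, some A), (B ::ₘ Γ, Δ)] (.imp A B ::ₘ Γ, Δ)
  | impR (A B : Fml α) (Γ : Multiset (Fml α)) :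
      LJRule [(A ::ₘ Γ, some B)] (Γ, some (.imp A B))

/-- The rule `K_□`: from `Γ ⇒ A` infer `□Γ ⇒ □A`. -/
inductive KBoxRule : List (Seq α) → Seq α → Prop where
  | mk (Γ : Multiset (Fml α)) (A : Fml α) :
      KBoxRule [(Γ, some A)] (Γ.map Fml.box, some (.box A))

/-- The rule `K_◇`: from `Γ, A ⇒ B` infer `□Γ, ◇A ⇒ ◇B`. -/
inductive KDiaRule : List (Seq α) → Seq α → Prop where
  | mk (Γ : Multiset (Fml α)) (A B : Fml α) :
      KDiaRule [(A ::ₘ Γ, some B)] (.dia A ::ₘ Γ.map Fml.box, some (.dia B))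

/-- The rule `◇L`: from `Γ, A ⇒ B` infer `Γ, ◇A ⇒ ◇B`. -/
inductive DiaLRule : List (Seq α) → Seq α → Prop where
  | mk (Γ : Multiset (Fml α)) (A B : Fml α) :
      DiaLRule [(A ::ₘ Γ, some B)] (.dia A ::ₘ Γ, some (.dia B))

/-- Adding a set `Ax` of axioms to a calculus: the initial sequents `⇒ σ(A)`
for every substitution instance `σ(A)` of every `A ∈ Ax`. -/
def axRule (Ax : Fml α → Prop) : RuleSet α := fun ps c =>
  ps = [] ∧ ∃ (A : Fml α) (σ : α → Fml α), Ax A ∧ c = ((0 : Multiset (Fml α)), some (A.subst σ))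

/-- Using a set of sequents as additional initial sequents (assumptions). -/
def hypRule (H : Set (Seq α)) : RuleSet α := fun ps c => ps = [] ∧ c ∈ H

/-- The sequent calculus `LJ+Ax`. -/
def LJSys (Ax : Fml α → Prop) : RuleSet α := fun ps c => LJRule ps c ∨ axRule Ax ps c

/-- The sequent calculus `CK+Ax = LJ + K_□ + K_◇ + Ax`. -/
def CKSys (Ax : Fml α → Prop) : RuleSet α := fun ps c =>
  LJRule ps c ∨ KBoxRule ps c ∨ KDiaRule ps c ∨ axRule Ax ps c

/-- The sequent calculus `CK_□+Ax = LJ + K_□ + Ax`. -/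
def CKBoxSys (Ax : Fml α → Prop) : RuleSet α := fun ps c =>
  LJRule ps c ∨ KBoxRule ps c ∨ axRule Ax ps c

/-- The sequent calculus `BLL+Ax = LJ + ◇L + Ax`. -/
def BLLSys (Ax : Fml α → Prop) : RuleSet α := fun ps c =>
  LJRule ps c ∨ DiaLRule ps c ∨ axRule Ax ps c

/-- Provability of a sequent in the calculus generated by a rule set. -/
inductive Derives (R : RuleSet α) : Multiset (Fml α) → Option (Fml α) → Prop where
  | step {ps : List (Seq α)} {c : Seq α} (hr : R ps c)
      (hp : ∀ p ∈ ps, Derives R p.1 p.2) : Derives R c.1 c.2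

/-- Basic formulas: generated from atoms, `⊤`, `⊥` by `∧`, `∨`, `◇`. -/
inductive Basic : Fml α → Prop where
  | atom (a : α) : Basic (.atom a)
  | top : Basic (.top : Fml α)
  | bot : Basic (.bot : Fml α)
  | and {A B : Fml α} : Basic A → Basic B → Basic (.and A B)
  | or {A B : Fml α} : Basic A → Basic B → Basic (.or A B)
  | dia {A : Fml α} : Basic A → Basic (.dia A)

/-- Almost positive formulas: generated from basic formulas by `∧`, `∨`, `□`, `◇`
and implications `A → B` with `A` basic and `B` almost positive. -/
inductive AlmostPos : Fml α → Prop where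
  | basic {A : Fml α} : Basic A → AlmostPos A
  | and {A B : Fml α} : AlmostPos A → AlmostPos B → AlmostPos (.and A B)
  | or {A B : Fml α} : AlmostPos A → AlmostPos B → AlmostPos (.or A B)
  | box {A : Fml α} : AlmostPos A → AlmostPos (.box A)
  | dia {A : Fml α} : AlmostPos A → AlmostPos (.dia A)
  | imp {A B : Fml α} : Basic A → AlmostPos B → AlmostPos (.imp A B)

/-- Constructive formulas: generated from basic formulas by `∧`, `□` and
implications `A → B` with `A` almost positive and `B` constructive. -/
inductive Constructive : Fml α → Prop where
  | basic {A : Fml α} : Basic A → Constructive A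
  | and {A B : Fml α} : Constructive A → Constructive B → Constructive (.and A B)
  | box {A : Fml α} : Constructive A → Constructive (.box A)
  | imp {A B : Fml α} : AlmostPos A → Constructive B → Constructive (.imp A B)

/-- Harrop formulas: atoms, `⊥`, `⊤`, closed under `∧`, `□`, and implications
`A → B` with `A` arbitrary and `B` Harrop. -/
inductive Harrop : Fml α → Prop where
  | atom (a : α) : Harrop (.atom a)
  | top : Harrop (.top : Fml α)
  | bot : Harrop (.bot : Fml α)
  | and {A B : Fml α} : Harrop A → Harrop B → Harrop (.and A B)
  | box {A : Fml α} : Harrop A → Harrop (.box A)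
  | imp (A : Fml α) {B : Fml α} : Harrop B → Harrop (.imp A B)

/-- Conjunction of a list of formulas (`⋀∅ = ⊤`). -/
def conj : List (Fml α) → Fml α
  | [] => .top
  | [A] => A
  | A :: B :: l => .and A (conj (B :: l))

/-- Disjunction of a list of formulas (`⋁∅ = ⊥`). -/
def disj : List (Fml α) → Fml α
  | [] => .bot
  | [A] => A
  | A :: B :: l => .or A (disj (B :: l))

/-- Disjunction of a succedent (at most one formula; `⋁∅ = ⊥`). -/
def odisj : Option (Fml α) → Fml α
  | none => .bot
  | some A => A

/-- The multiset `{A_i → B_i}_{i ∈ I}` of implications of an indexed family. -/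
def imps (AB : List (Fml α × Fml α)) : Multiset (Fml α) :=
  ↑(AB.map fun p => Fml.imp p.1 p.2)

/-- The conjunction `⋀_{i∈I} (A_i → B_i)` of an indexed family of implications. -/
def impConj (AB : List (Fml α × Fml α)) : Fml α :=
  conj (AB.map fun p => Fml.imp p.1 p.2)

/-- Truth in the one-node *irreflexive* frame `𝒦ᵢ` under a Boolean valuation:
`□A` is always true and `◇A` is always false; the propositional connectives
are evaluated classically. -/
def evalI (v : α → Bool) : Fml α → Bool
  | .atom a  => v a
  | .top     => true
  | .bot     => false
  | .and A B => evalI v A && evalI v B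
  | .or A B  => evalI v A || evalI v B
  | .imp A B => !evalI v A || evalI v B
  | .box _   => true
  | .dia _   => false

/-- Truth in the one-node *reflexive* frame `𝒦ᵣ` under a Boolean valuation:
`□A` and `◇A` take the value of `A`. -/
def evalR (v : α → Bool) : Fml α → Bool
  | .atom a  => v a
  | .top     => true
  | .bot     => false
  | .and A B => evalR v A && evalR v B
  | .or A B  => evalR v A || evalR v B
  | .imp A B => !evalR v A || evalR v B
  | .box A   => evalR v A
  | .dia A   => evalR v A

/-- Validity of a sequent with respect to a one-node semantics: under every
valuation, if all formulas of the antecedent are true then so is the succedent. -/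
def SeqValid (ev : (α → Bool) → Fml α → Bool) (Γ : Multiset (Fml α)) (Δ : Option (Fml α)) :
    Prop :=
  ∀ v : α → Bool, (∀ A ∈ Γ, ev v A = true) → ∃ B ∈ Δ, ev v B = true

/-- `CK+Ax` is T-free: every provable sequent is valid in the irreflexive node frame. -/
def TFree (Ax : Fml α → Prop) : Prop :=
  ∀ (Γ : Multiset (Fml α)) (Δ : Option (Fml α)), Derives (CKSys Ax) Γ Δ → SeqValid evalI Γ Δ

/-- `CK+Ax` is T-full: every provable sequent is valid in the reflexive node
frame and the calculus proves `⇒ □p → p` and `⇒ p → ◇p`. -/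
def TFull (Ax : Fml α → Prop) : Prop :=
  (∀ (Γ : Multiset (Fml α)) (Δ : Option (Fml α)), Derives (CKSys Ax) Γ Δ → SeqValid evalR Γ Δ) ∧
  (∀ a : α, Derives (CKSys Ax) 0 (some (.imp (.box (.atom a)) (.atom a)))) ∧
  (∀ a : α, Derives (CKSys Ax) 0 (some (.imp (.atom a) (.dia (.atom a)))))

/-- Classical validity of a (modality-free) sequent: `⋀Γ → ⋁Δ` is true under
every Boolean valuation of the atoms. -/
def ClValid (Γ : Multiset (Fml α)) (Δ : Option (Fml α)) : Prop :=
  ∀ v : α → Bool, (∀ A ∈ Γ, evalI v A = true) → ∃ B ∈ Δ, evalI v B = true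

/-- Nonempty conjunctions of atoms. -/
inductive AtomConj : Fml α → Prop where
  | single (a : α) : AtomConj (.atom a)
  | and {A B : Fml α} : AtomConj A → AtomConj B → AtomConj (.and A B)

/-- Implicational Horn formulas: `⊥`, atoms, and implications `⋀Q → r` with `Q`
a nonempty multiset of atoms and `r` an atom or `⊥`. -/
inductive ImpHorn : Fml α → Prop where
  | bot : ImpHorn (.bot : Fml α)
  | atom (a : α) : ImpHorn (.atom a)
  | impAtom {A : Fml α} (hA : AtomConj A) (a : α) : ImpHorn (.imp A (.atom a))
  | impBot {A : Fml α} (hA : AtomConj A) : ImpHorn (.imp A .bot)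

/-- Formulas of the form `◇^n p` with `p` an atom and `n ≥ 0`. -/
inductive DiaPowAtom : Fml α → Prop where
  | atom (a : α) : DiaPowAtom (.atom a)
  | dia {A : Fml α} : DiaPowAtom A → DiaPowAtom (.dia A)

/-- Nonempty conjunctions `⋀_{i=1}^k ◇^{n_i} p_i` of formulas `◇^{n_i} p_i`. -/
inductive DiaConj : Fml α → Prop where
  | single {A : Fml α} : DiaPowAtom A → DiaConj A
  | and {A B : Fml α} : DiaConj A → DiaConj B → DiaConj (.and A B)

/-- Modal Horn formulas: `⊥` and atoms, closed under `□` and under implications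
`A → B` with `A = ⋀_{i=1}^k ◇^{n_i} p_i` and `B` modal Horn. -/
inductive ModalHorn : Fml α → Prop where
  | bot : ModalHorn (.bot : Fml α)
  | atom (a : α) : ModalHorn (.atom a)
  | box {A : Fml α} : ModalHorn A → ModalHorn (.box A)
  | imp {A B : Fml α} : DiaConj A → ModalHorn B → ModalHorn (.imp A B)

/-- The predicate "all atoms of the formula satisfy `P`". -/
def Fml.AtomsIn (P : α → Prop) : Fml α → Prop
  | .atom a  => P a
  | .top     => True
  | .bot     => True
  | .and A B => A.AtomsIn P ∧ B.AtomsIn P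
  | .or A B  => A.AtomsIn P ∧ B.AtomsIn P
  | .imp A B => A.AtomsIn P ∧ B.AtomsIn P
  | .box A   => A.AtomsIn P
  | .dia A   => A.AtomsIn P

/-- No `◇` occurs in the formula. -/
def Fml.DiaFree : Fml α → Prop
  | .atom _  => True
  | .top     => True
  | .bot     => True
  | .and A B => A.DiaFree ∧ B.DiaFree
  | .or A B  => A.DiaFree ∧ B.DiaFree
  | .imp A B => A.DiaFree ∧ B.DiaFree
  | .box A   => A.DiaFree
  | .dia _   => False

/-- No `□` occurs in the formula. -/
def Fml.BoxFree : Fml α → Prop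
  | .atom _  => True
  | .top     => True
  | .bot     => True
  | .and A B => A.BoxFree ∧ B.BoxFree
  | .or A B  => A.BoxFree ∧ B.BoxFree
  | .imp A B => A.BoxFree ∧ B.BoxFree
  | .box _   => False
  | .dia A   => A.BoxFree

/-- The formula is modality-free (propositional). -/
def Fml.ModFree : Fml α → Prop
  | .atom _  => True
  | .top     => True
  | .bot     => True
  | .and A B => A.ModFree ∧ B.ModFree
  | .or A B  => A.ModFree ∧ B.ModFree
  | .imp A B => A.ModFree ∧ B.ModFree
  | .box _   => False
  | .dia _   => False

/-- An angling of the language: an injection `φ ↦ ⟨φ⟩` from formulas into the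
atoms whose image (the angled atoms) is disjoint from a fixed infinite set of
plain atoms. -/
structure Angling (α : Type) where
  angle : Fml α → α
  plain : Set α
  inj : Function.Injective angle
  plain_infinite : plain.Infinite
  disjoint : ∀ φ : Fml α, angle φ ∉ plain

/-- `a` is an angled atom. -/
def Angling.Angled (S : Angling α) (a : α) : Prop := ∃ φ : Fml α, S.angle φ = a

/-- The translation `t`: `⊥^t = ⊥`, `p^t = ⟨p⟩`, `⊤^t = ⟨⊤⟩`,
`(A ∘ B)^t = (A^t ∘ B^t) ∧ ⟨A ∘ B⟩` and `(○A)^t = (○A^t) ∧ ⟨○A⟩`. -/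
def Angling.tr (S : Angling α) : Fml α → Fml α
  | .atom a  => .atom (S.angle (.atom a))
  | .top     => .atom (S.angle .top)
  | .bot     => .bot
  | .and A B => .and (.and (S.tr A) (S.tr B)) (.atom (S.angle (.and A B)))
  | .or A B  => .and (.or (S.tr A) (S.tr B)) (.atom (S.angle (.or A B)))
  | .imp A B => .and (.imp (S.tr A) (S.tr B)) (.atom (S.angle (.imp A B)))
  | .box A   => .and (.box (S.tr A)) (.atom (S.angle (.box A)))
  | .dia A   => .and (.dia (S.tr A)) (.atom (S.angle (.dia A)))

/-- Action of the standard substitution on atoms: an angled atom `⟨φ⟩` is sent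
to `φ`; plain atoms are fixed. -/
noncomputable def Angling.stdAtom (S : Angling α) (a : α) : Fml α :=
  haveI := Classical.propDecidable (∃ φ : Fml α, S.angle φ = a)
  if h : ∃ φ : Fml α, S.angle φ = a then h.choose else .atom a

/-- The standard substitution `s`: replaces each angled atom `⟨φ⟩` by `φ`,
fixes the plain atoms, and commutes with all connectives. -/
noncomputable def Angling.std (S : Angling α) : Fml α → Fml α :=
  Fml.subst S.stdAtom

/-- The Visser–Harrop property of a calculus. -/
def VisserHarrop (R : RuleSet α) : Prop :=
  ∀ (Γ : Multiset (Fml α)), (∀ A ∈ Γ, Harrop A) →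
  ∀ (AB : List (Fml α × Fml α)) (C D : Fml α),
    Derives R (Γ + imps AB) (some (.or C D)) →
    Derives R (Γ + imps AB) (some C) ∨
    Derives R (Γ + imps AB) (some D) ∨
    ∃ p ∈ AB, Derives R (Γ + imps AB) (some p.1)

/-- The disjunction property of a calculus. -/
def DisjProp (R : RuleSet α) : Prop :=
  ∀ C D : Fml α, Derives R 0 (some (.or C D)) →
    Derives R 0 (some C) ∨ Derives R 0 (some D)

/-- The formula interpretation `I(Γ ⇒ Δ) = ⋀Γ → ⋁Δ` belongs to `L` (stated for
every enumeration of the antecedent multiset as a list). -/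
def interpIn (L : Set (Fml α)) (s : Seq α) : Prop :=
  ∀ l : List (Fml α), (↑l : Multiset (Fml α)) = s.1 → Fml.imp (conj l) (odisj s.2) ∈ L

/- Named modal axioms (with `p := atom 0`, `q := atom 1`). -/
def axTa : Fml ℕ := .imp (.box (.atom 0)) (.atom 0)
def axTb : Fml ℕ := .imp (.atom 0) (.dia (.atom 0))
def axBa : Fml ℕ := .imp (.dia (.box (.atom 0))) (.atom 0)
def axBb : Fml ℕ := .imp (.atom 0) (.box (.dia (.atom 0)))
def ax4a : Fml ℕ := .imp (.box (.atom 0)) (.box (.box (.atom 0)))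
def ax4b : Fml ℕ := .imp (.dia (.dia (.atom 0))) (.dia (.atom 0))
def ax5a : Fml ℕ := .imp (.dia (.box (.atom 0))) (.box (.atom 0))
def ax5b : Fml ℕ := .imp (.dia (.atom 0)) (.box (.dia (.atom 0)))
def axDiaBot : Fml ℕ := .imp (.dia .bot) .bot
def axDiaOr : Fml ℕ :=
  .imp (.dia (.or (.atom 0) (.atom 1))) (.or (.dia (.atom 0)) (.dia (.atom 1)))
def axBoxImp : Fml ℕ :=
  .imp (.imp (.dia (.atom 0)) (.box (.atom 1))) (.box (.imp (.atom 0) (.atom 1)))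

/-- The axioms of `X ⊆ {T, B, 4, 5}` in both their `a`- and `b`-versions. -/
def XAxioms (tT tB t4 t5 : Bool) : Set (Fml ℕ) :=
  (if tT then ({axTa, axTb} : Set (Fml ℕ)) else ∅) ∪
  (if tB then ({axBa, axBb} : Set (Fml ℕ)) else ∅) ∪
  (if t4 then ({ax4a, ax4b} : Set (Fml ℕ)) else ∅) ∪
  (if t5 then ({ax5a, ax5b} : Set (Fml ℕ)) else ∅)

/-- The additional axioms of `IK` over `CK`. -/
def IKExtra : Set (Fml ℕ) := {axDiaBot, axDiaOr, axBoxImp}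

/-- The right rule with premises `{Γ, φ̄_i ⇒ ψ̄_i}_{i∈I}` and conclusion
`Γ, θ̄ ⇒ η̄`, closed under all substitutions of formulas for atoms and
multisets for the context `Γ`. -/
def rightRuleInst (prems : List (List (Fml α) × Option (Fml α)))
    (θ : List (Fml α)) (η : Option (Fml α)) : RuleSet α := fun ps c =>
  ∃ (σ : α → Fml α) (Γ : Multiset (Fml α)),
    ps = prems.map (fun pr =>
        ((Γ + ↑(pr.1.map (Fml.subst σ)) : Multiset (Fml α)), pr.2.map (Fml.subst σ))) ∧
    c = ((Γ + ↑(θ.map (Fml.subst σ)) : Multiset (Fml α)), η.map (Fml.subst σ))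

/-- The left rule with premises `{Γ, φ̄_i ⇒ ψ̄_i}_{i∈I} ∪ {Γ, θ̄_j ⇒ Δ}_{j∈J}`
and conclusion `Γ, η̄ ⇒ Δ`, closed under all substitutions of formulas for
atoms and multisets for `Γ` and `Δ`. -/
def leftRuleInst (prems : List (List (Fml α) × Option (Fml α)))
    (lefts : List (List (Fml α))) (η : List (Fml α)) : RuleSet α := fun ps c =>
  ∃ (σ : α → Fml α) (Γ : Multiset (Fml α)) (Δ : Option (Fml α)),
    ps = prems.map (fun pr =>
          ((Γ + ↑(pr.1.map (Fml.subst σ)) : Multiset (Fml α)), pr.2.map (Fml.subst σ)))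
        ++ lefts.map (fun θj => ((Γ + ↑(θj.map (Fml.subst σ)) : Multiset (Fml α)), Δ)) ∧
    c = ((Γ + ↑(η.map (Fml.subst σ)) : Multiset (Fml α)), Δ)

/-- The formula `Ax_R` of a right rule. -/
def AxRight (prems : List (List (Fml α) × Option (Fml α)))
    (θ : List (Fml α)) (η : Option (Fml α)) : Fml α :=
  .imp (.and (conj (prems.map fun pr => .imp (conj pr.1) (odisj pr.2))) (conj θ)) (odisj η)

/-- The formula `Ax_R` of a left rule. -/
def AxLeft (prems : List (List (Fml α) × Option (Fml α)))
    (lefts : List (List (Fml α))) (η : List (Fml α)) : Fml α :=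
  .imp (.and (conj (prems.map fun pr => .imp (conj pr.1) (odisj pr.2))) (conj η))
    (disj (lefts.map conj))

/-- The forgetful translation `f_i`: fixes atoms, `⊤`, `⊥`, commutes with
`∧`, `∨`, `→`, `□`, and sends every `◇A` to `⊥`. -/
def fi : Fml α → Fml α
  | .atom a  => .atom a
  | .top     => .top
  | .bot     => .bot
  | .and A B => .and (fi A) (fi B)
  | .or A B  => .or (fi A) (fi B)
  | .imp A B => .imp (fi A) (fi B)
  | .box A   => .box (fi A)
  | .dia _   => .bot

/-- The forgetful translation `f_r`: fixes atoms, `⊤`, `⊥`, commutes with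
`∧`, `∨`, `→`, `□`, and sends `◇A` to `f_r A`. -/
def fr : Fml α → Fml α
  | .atom a  => .atom a
  | .top     => .top
  | .bot     => .bot
  | .and A B => .and (fr A) (fr B)
  | .or A B  => .or (fr A) (fr B)
  | .imp A B => .imp (fr A) (fr B)
  | .box A   => .box (fr A)
  | .dia A   => fr A

/-!
For a basic formula `B`, the sequent `B(φ̄)^t ⇒ B(φ̄^t)` is immediate, since `t` only adds
conjuncts. The converse `B(φ̄^t) ⇒ B(φ̄)^t` has to rebuild the angled atoms of all
subformulas, and this is what the modal Horn formulas `⟨⊤⟩`, `⟨B⟩ ∧ ⟨C⟩ → ⟨B ∧ C⟩`,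
`⟨B⟩ → ⟨B ∨ C⟩`, `⟨C⟩ → ⟨B ∨ C⟩` and `◇⟨B⟩ → ⟨◇B⟩` do; under the standard substitution they
become trivial implications. For an almost positive `A` one inducts on `A`: the converse
direction is only needed for antecedents of implications, which are basic, and passing under
`□` or `◇` boxes the Horn assumptions, which keeps them modal Horn and their standard
substitutions provable by `K_□`.
-/

abbrev CKProves (Γ : Multiset (Fml α)) (A : Fml α) : Prop :=
  Derives (CKSys (fun _ : Fml α => False)) Γ (some A)

namespace CKProves

variable {Γ Γ' : Multiset (Fml α)} {A B C : Fml α}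

theorem ax (Γ : Multiset (Fml α)) (A : Fml α) : CKProves (A ::ₘ Γ) A :=
  .step (c := (A ::ₘ Γ, some A)) (Or.inl (.id Γ A)) (by simp)

theorem botL (Γ : Multiset (Fml α)) (A : Fml α) : CKProves (.bot ::ₘ Γ) A :=
  .step (c := (.bot ::ₘ Γ, some A)) (Or.inl (.botL Γ (some A))) (by simp)

theorem topR (Γ : Multiset (Fml α)) : CKProves Γ .top :=
  .step (c := (Γ, some .top)) (Or.inl (.topR Γ)) (by simp)

theorem weaken (h : CKProves Γ A) (B : Fml α) : CKProves (B ::ₘ Γ) A :=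
  .step (c := (B ::ₘ Γ, some A)) (Or.inl (.wL B Γ (some A))) (by simpa using h)

theorem mono (h : CKProves Γ A) (hle : Γ ≤ Γ') : CKProves Γ' A := by
  obtain ⟨Δ, rfl⟩ := Multiset.le_iff_exists_add.mp hle
  induction Δ using Multiset.induction with
  | empty => simpa using h
  | cons B Δ ih => simpa only [Multiset.add_cons] using (ih le_self_add).weaken B

theorem of_mem (hA : A ∈ Γ) : CKProves Γ A := by
  obtain ⟨Γ, rfl⟩ := Multiset.exists_cons_of_mem hA
  exact ax Γ A

theorem cut (h₁ : CKProves Γ A) (h₂ : CKProves (A ::ₘ Γ) B) : CKProves Γ B :=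
  .step (c := (Γ, some B)) (Or.inl (.cut A Γ (some B))) (by simp [h₁, h₂])

theorem trans (h₁ : CKProves Γ A) (h₂ : CKProves {A} B) : CKProves Γ B :=
  h₁.cut (h₂.mono (Multiset.cons_le_cons A (Multiset.zero_le Γ)))

theorem andL₁ (h : CKProves (A ::ₘ Γ) C) (B : Fml α) : CKProves (.and A B ::ₘ Γ) C :=
  .step (c := (.and A B ::ₘ Γ, some C)) (Or.inl (.andL₁ A B Γ (some C))) (by simpa using h)

theorem andL₂ (h : CKProves (B ::ₘ Γ) C) (A : Fml α) : CKProves (.and A B ::ₘ Γ) C :=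
  .step (c := (.and A B ::ₘ Γ, some C)) (Or.inl (.andL₂ A B Γ (some C))) (by simpa using h)

theorem andR (h₁ : CKProves Γ A) (h₂ : CKProves Γ B) : CKProves Γ (.and A B) :=
  .step (c := (Γ, some (.and A B))) (Or.inl (.andR A B Γ)) (by simp [h₁, h₂])

theorem andE₁ (h : CKProves Γ (.and A B)) : CKProves Γ A :=
  h.cut ((ax Γ A).andL₁ B)

theorem andE₂ (h : CKProves Γ (.and A B)) : CKProves Γ B :=
  h.cut ((ax Γ B).andL₂ A)

theorem orL (h₁ : CKProves (A ::ₘ Γ) C) (h₂ : CKProves (B ::ₘ Γ) C) :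
    CKProves (.or A B ::ₘ Γ) C :=
  .step (c := (.or A B ::ₘ Γ, some C)) (Or.inl (.orL A B Γ (some C))) (by simp [h₁, h₂])

theorem orR₁ (h : CKProves Γ A) (B : Fml α) : CKProves Γ (.or A B) :=
  .step (c := (Γ, some (.or A B))) (Or.inl (.orR₁ A B Γ)) (by simpa using h)

theorem orR₂ (h : CKProves Γ B) (A : Fml α) : CKProves Γ (.or A B) :=
  .step (c := (Γ, some (.or A B))) (Or.inl (.orR₂ A B Γ)) (by simpa using h)

theorem impL (h₁ : CKProves Γ A) (h₂ : CKProves (B ::ₘ Γ) C) :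
    CKProves (.imp A B ::ₘ Γ) C :=
  .step (c := (.imp A B ::ₘ Γ, some C)) (Or.inl (.impL A B Γ (some C))) (by simp [h₁, h₂])

theorem impR (h : CKProves (A ::ₘ Γ) B) : CKProves Γ (.imp A B) :=
  .step (c := (Γ, some (.imp A B))) (Or.inl (.impR A B Γ)) (by simpa using h)

theorem mp (h₁ : CKProves Γ A) (h₂ : CKProves Γ (.imp A B)) : CKProves Γ B :=
  h₂.cut (h₁.impL (ax Γ B))

theorem box (h : CKProves Γ A) : CKProves (Γ.map .box) (.box A) :=
  .step (c := (Γ.map .box, some (.box A))) (Or.inr (Or.inl (.mk Γ A))) (by simpa using h)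

theorem dia (h : CKProves (A ::ₘ Γ) B) : CKProves (.dia A ::ₘ Γ.map .box) (.dia B) :=
  .step (c := (.dia A ::ₘ Γ.map .box, some (.dia B))) (Or.inr (Or.inr (Or.inl (.mk Γ A B))))
    (by simpa using h)

theorem conj_of_forall : ∀ l : List (Fml α), (∀ F ∈ l, CKProves 0 F) → CKProves 0 (conj l)
  | [], _ => topR 0
  | [A], h => h A (by simp)
  | A :: B :: l, h =>
    andR (h A (by simp)) (conj_of_forall (B :: l) fun F hF => h F (List.mem_cons_of_mem A hF))

end CKProves

namespace Angling

variable (S : Angling α)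

theorem stdAtom_angle (ψ : Fml α) : S.stdAtom (S.angle ψ) = ψ := by
  have h : ∃ φ : Fml α, S.angle φ = S.angle ψ := ⟨ψ, rfl⟩
  rw [stdAtom, dif_pos h]
  exact S.inj h.choose_spec

theorem std_angle (ψ : Fml α) : S.std (.atom (S.angle ψ)) = ψ :=
  S.stdAtom_angle ψ

theorem ckProves_angle_of_tr {Γ : Multiset (Fml α)} {ψ : Fml α} (h : CKProves Γ (S.tr ψ)) :
    CKProves Γ (.atom (S.angle ψ)) := by
  refine h.trans ?_
  cases ψ with
  | atom | top => exact .ax _ _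
  | bot => exact .botL _ _
  | and | or | imp | box | dia => exact (CKProves.ax _ _).andE₂

def AdmissibleHorn (F : Fml α) : Prop :=
  ModalHorn F ∧ F.AtomsIn S.Angled ∧ CKProves 0 (S.std F)

variable {S}

theorem AdmissibleHorn.box {F : Fml α} (hF : S.AdmissibleHorn F) : S.AdmissibleHorn (.box F) :=
  ⟨hF.1.box, hF.2.1, hF.2.2.box⟩

theorem admissibleHorn_angle {ψ : Fml α} (h : CKProves 0 ψ) :
    S.AdmissibleHorn (.atom (S.angle ψ)) :=
  ⟨.atom _, ⟨ψ, rfl⟩, by rwa [std_angle]⟩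

theorem admissibleHorn_imp_angle {A ψ : Fml α} (hA : DiaConj A) (hAt : A.AtomsIn S.Angled)
    (h : CKProves {S.std A} ψ) : S.AdmissibleHorn (.imp A (.atom (S.angle ψ))) :=
  ⟨.imp hA (.atom _), ⟨hAt, ψ, rfl⟩, by
    show CKProves 0 (.imp (S.std A) (S.stdAtom (S.angle ψ)))
    exact .impR (by rwa [stdAtom_angle])⟩

variable (S) in
def HornProves (Γ : Multiset (Fml α)) (A : Fml α) : Prop :=
  ∃ Φ : List (Fml α), (∀ F ∈ Φ, S.AdmissibleHorn F) ∧
    CKProves (Γ + (Φ : Multiset (Fml α))) A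

namespace HornProves

variable {Γ Γ' Γ₁ Γ₂ : Multiset (Fml α)} {A A₁ A₂ B C : Fml α}

theorem of_ckProves (h : CKProves Γ A) : S.HornProves Γ A :=
  ⟨[], by simp, by simpa using h⟩

theorem horn (hF : S.AdmissibleHorn A) : S.HornProves Γ A :=
  ⟨[A], by simpa using hF, .of_mem (by simp)⟩

theorem lift (f : ∀ Δ, CKProves (Γ₁ + Δ) A₁ → CKProves (Γ + Δ) B)
    (h : S.HornProves Γ₁ A₁) : S.HornProves Γ B :=
  let ⟨Φ, hΦ, hd⟩ := h
  ⟨Φ, hΦ, f _ hd⟩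

theorem lift₂
    (f : ∀ Δ, CKProves (Γ₁ + Δ) A₁ → CKProves (Γ₂ + Δ) A₂ → CKProves (Γ + Δ) B)
    (h₁ : S.HornProves Γ₁ A₁) (h₂ : S.HornProves Γ₂ A₂) : S.HornProves Γ B := by
  obtain ⟨Φ₁, hΦ₁, hd₁⟩ := h₁
  obtain ⟨Φ₂, hΦ₂, hd₂⟩ := h₂
  refine ⟨Φ₁ ++ Φ₂, fun F hF => (List.mem_append.mp hF).elim (hΦ₁ F) (hΦ₂ F), f _ ?_ ?_⟩
  · exact hd₁.mono (by simp [← Multiset.coe_add, ← add_assoc])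
  · exact hd₂.mono (by simp [← Multiset.coe_add, add_left_comm Γ₂])

theorem mono (h : S.HornProves Γ A) (hle : Γ ≤ Γ') : S.HornProves Γ' A :=
  h.lift fun Δ hd => hd.mono (add_le_add_left hle Δ)

theorem trans (h₁ : S.HornProves Γ A) (h₂ : S.HornProves {A} B) : S.HornProves Γ B :=
  lift₂ (fun _ hd₁ hd₂ => hd₁.cut (hd₂.mono (by simp [Multiset.singleton_add]))) h₁ h₂

theorem andL₁ (h : S.HornProves (A ::ₘ Γ) C) (B : Fml α) :
    S.HornProves (.and A B ::ₘ Γ) C :=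
  h.lift fun Δ hd => by
    rw [Multiset.cons_add] at hd ⊢
    exact hd.andL₁ B

theorem andL₂ (h : S.HornProves (B ::ₘ Γ) C) (A : Fml α) :
    S.HornProves (.and A B ::ₘ Γ) C :=
  h.lift fun Δ hd => by
    rw [Multiset.cons_add] at hd ⊢
    exact hd.andL₂ A

theorem andR (h₁ : S.HornProves Γ A) (h₂ : S.HornProves Γ B) : S.HornProves Γ (.and A B) :=
  lift₂ (fun _ => CKProves.andR) h₁ h₂

theorem orL (h₁ : S.HornProves (A ::ₘ Γ) C) (h₂ : S.HornProves (B ::ₘ Γ) C) :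
    S.HornProves (.or A B ::ₘ Γ) C :=
  lift₂ (fun Δ hd₁ hd₂ => by
    rw [Multiset.cons_add] at hd₁ hd₂ ⊢
    exact hd₁.orL hd₂) h₁ h₂

theorem orR₁ (h : S.HornProves Γ A) (B : Fml α) : S.HornProves Γ (.or A B) :=
  h.lift fun _ hd => hd.orR₁ B

theorem orR₂ (h : S.HornProves Γ B) (A : Fml α) : S.HornProves Γ (.or A B) :=
  h.lift fun _ hd => hd.orR₂ A

theorem impR (h : S.HornProves (A ::ₘ Γ) B) : S.HornProves Γ (.imp A B) :=
  h.lift fun Δ hd => by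
    rw [Multiset.cons_add] at hd
    exact hd.impR

theorem mp (h₁ : S.HornProves Γ A) (h₂ : S.HornProves Γ (.imp A B)) : S.HornProves Γ B :=
  lift₂ (fun _ => CKProves.mp) h₁ h₂

theorem box (h : S.HornProves Γ A) : S.HornProves (Γ.map .box) (.box A) := by
  obtain ⟨Φ, hΦ, hd⟩ := h
  refine ⟨Φ.map .box, by simpa using fun F hF => (hΦ F hF).box, ?_⟩
  simpa using hd.box

theorem dia (h : S.HornProves (A ::ₘ Γ) B) :
    S.HornProves (.dia A ::ₘ Γ.map .box) (.dia B) := by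
  obtain ⟨Φ, hΦ, hd⟩ := h
  refine ⟨Φ.map .box, by simpa using fun F hF => (hΦ F hF).box, ?_⟩
  rw [Multiset.cons_add] at hd
  simpa [Multiset.cons_add] using hd.dia

theorem angle_of_tr {ψ : Fml α} (h : S.HornProves Γ (S.tr ψ)) :
    S.HornProves Γ (.atom (S.angle ψ)) :=
  h.lift fun _ => S.ckProves_angle_of_tr

end HornProves

end Angling

section Commutation

open Angling

variable {β : Type} (S : Angling α) (φ : β → Fml α)

theorem ckProves_subst_tr_of_basic {B : Fml β} (hB : Basic B) :
    CKProves {S.tr (B.subst φ)} (B.subst fun i => S.tr (φ i)) := by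
  induction hB with
  | atom => exact .ax _ _
  | top => exact .topR _
  | bot => exact .botL _ _
  | @and B C _ _ ihB ihC =>
    have hBC : CKProves {S.tr ((B.and C).subst φ)} (.and (S.tr (B.subst φ)) (S.tr (C.subst φ))) :=
      (CKProves.ax _ _).andE₁
    exact .andR (hBC.andE₁.trans ihB) (hBC.andE₂.trans ihC)
  | or _ _ ihB ihC => exact ((ihB.orR₁ _).orL (ihC.orR₂ _)).andL₁ _
  | dia _ ihB => exact ihB.dia.andL₁ _

theorem hornProves_tr_subst_of_basic {B : Fml β} (hB : Basic B) :
    S.HornProves {B.subst fun i => S.tr (φ i)} (S.tr (B.subst φ)) := by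
  induction hB with
  | atom => exact .of_ckProves (.ax _ _)
  | top => exact .horn (admissibleHorn_angle (.topR 0))
  | bot => exact .of_ckProves (.botL _ _)
  | @and B C _ _ ihB ihC =>
    have hB := ihB.andL₁ (C.subst fun i => S.tr (φ i))
    have hC := ihC.andL₂ (B.subst fun i => S.tr (φ i))
    have horn : S.AdmissibleHorn (.imp (.and (.atom (S.angle (B.subst φ)))
        (.atom (S.angle (C.subst φ)))) (.atom (S.angle ((B.subst φ).and (C.subst φ))))) :=
      admissibleHorn_imp_angle (.and (.single (.atom _)) (.single (.atom _)))
        ⟨⟨_, rfl⟩, _, rfl⟩ (by simpa only [std, Fml.subst, stdAtom_angle] using .ax 0 _)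
    exact .andR (.andR hB hC) (.mp (.andR hB.angle_of_tr hC.angle_of_tr) (.horn horn))
  | @or B C _ _ ihB ihC =>
    have hornB : S.AdmissibleHorn (.imp (.atom (S.angle (B.subst φ)))
        (.atom (S.angle ((B.subst φ).or (C.subst φ))))) :=
      admissibleHorn_imp_angle (.single (.atom _)) ⟨_, rfl⟩
        (by simp only [std, Fml.subst, stdAtom_angle]; exact (CKProves.ax 0 _).orR₁ _)
    have hornC : S.AdmissibleHorn (.imp (.atom (S.angle (C.subst φ)))
        (.atom (S.angle ((B.subst φ).or (C.subst φ))))) :=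
      admissibleHorn_imp_angle (.single (.atom _)) ⟨_, rfl⟩
        (by simp only [std, Fml.subst, stdAtom_angle]; exact (CKProves.ax 0 _).orR₂ _)
    exact .orL (.andR (ihB.orR₁ _) (.mp ihB.angle_of_tr (.horn hornB)))
      (.andR (ihC.orR₂ _) (.mp ihC.angle_of_tr (.horn hornC)))
  | @dia B _ ihB =>
    have horn : S.AdmissibleHorn (.imp (.dia (.atom (S.angle (B.subst φ))))
        (.atom (S.angle (.dia (B.subst φ))))) :=
      admissibleHorn_imp_angle (.single (.dia (.atom _))) ⟨_, rfl⟩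
        (by simpa only [std, Fml.subst, stdAtom_angle] using .ax 0 _)
    have hd := ihB.dia
    have ha := ihB.angle_of_tr.dia
    rw [Multiset.map_zero] at hd ha
    exact .andR hd (.mp ha (.horn horn))

theorem hornProves_subst_tr_of_almostPos {A : Fml β} (hA : AlmostPos A) :
    S.HornProves {S.tr (A.subst φ)} (A.subst fun i => S.tr (φ i)) := by
  induction hA with
  | basic hB => exact .of_ckProves (ckProves_subst_tr_of_basic S φ hB)
  | and _ _ ihB ihC => exact (HornProves.andR (ihB.andL₁ _) (ihC.andL₂ _)).andL₁ _
  | or _ _ ihB ihC => exact ((ihB.orR₁ _).orL (ihC.orR₂ _)).andL₁ _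
  | box _ ihB =>
    have hb := ihB.box
    rw [Multiset.map_singleton] at hb
    exact hb.andL₁ _
  | dia _ ihB =>
    have hd := ihB.dia
    rw [Multiset.map_zero] at hd
    exact hd.andL₁ _
  | @imp B C hB _ ihC =>
    have hBt : S.HornProves ((B.subst fun i => S.tr (φ i)) ::ₘ
        {.imp (S.tr (B.subst φ)) (S.tr (C.subst φ))}) (S.tr (B.subst φ)) :=
      (hornProves_tr_subst_of_basic S φ hB).mono (Multiset.cons_le_cons _ (Multiset.zero_le _))
    exact (HornProves.impR ((hBt.mp (.of_ckProves (.of_mem (by simp)))).trans ihC)).andL₁ _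

end Commutation

/-- commutation of the translation `t` with almost positive
formulas. -/
theorem statement_6 (S : Angling ℕ) (k : ℕ) (A : Fml (Fin k)) (hA : AlmostPos A)
    (φ : Fin k → Fml ℕ) :
    ∃ Φ : List (Fml ℕ),
      (∀ F ∈ Φ, ModalHorn F ∧ F.AtomsIn S.Angled) ∧
      Derives (CKSys (fun _ : Fml ℕ => False))
        (S.tr (A.subst φ) ::ₘ (↑Φ : Multiset (Fml ℕ)))
        (some (A.subst fun i => S.tr (φ i))) ∧
      Derives (CKSys (fun _ : Fml ℕ => False)) 0 (some (conj (Φ.map S.std))) := by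
  obtain ⟨Φ, hΦ, hd⟩ := hornProves_subst_tr_of_almostPos S φ hA
  rw [Multiset.singleton_add] at hd
  refine ⟨Φ, fun F hF => ⟨(hΦ F hF).1, (hΦ F hF).2.1⟩, hd, ?_⟩
  exact CKProves.conj_of_forall _ (by simpa using fun F hF => (hΦ F hF).2.2)

end UPT
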